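/- arXiv:1609.01897 — 2 statements merged into one kernel-verified Lean document; each statement's English description precedes it below -/
import Mathlib

section
/- Let (K,d) be a compact geodesic metric space satisfying the betweenness property, let ε > 0, and let ζ = (L, M) : [0, ∞) → K × K be an ε-simple-pursuit curve with d(L(t), M(t)) > ε for all t ≥ 0. Let S ⊂ K × K be a set of diameter less than ε (in the max metric ρ), let m ≥ 2 be an integer, and let (i_n) be a strictly increasing sequence of nonnegative integers such that each restriction ζ|[i_n ε, i_n ε + mε] is a round for S. Define ζⁿ : [0, mε] → K × K by ζⁿ(t) = ζ(i_n ε + t). Then some subsequence of (ζⁿ) converges uniformly to a curve ζ* = (ζ*_L, ζ*_M) : [0, mε] → K × K such that: (1) ζ* is a good curve; (2) d(ζ*_L(0), ζ*_L(mε)) < ε; (3) d(ζ*_L(0), ζ*_M(0)) = d(ζ*_L(mε), ζ*_M(mε)). -/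
open Filter Topology

variable {K : Type*} [MetricSpace K]

/-- `C` lies between `A` and `B`, i.e. `d(A,C) + d(C,B) = d(A,B)`. -/
def LiesBetween (C A B : K) : Prop := dist A C + dist C B = dist A B

/-- `γ` is a geodesic path on `[a, b]`: `d(γ t, γ t') = |t - t'|` for `t, t' ∈ [a,b]`. -/
def IsGeodPath (γ : ℝ → K) (a b : ℝ) : Prop :=
  ∀ t ∈ Set.Icc a b, ∀ t' ∈ Set.Icc a b, dist (γ t) (γ t') = |t - t'|

/-- A geodesic space: every pair of points is joined by a geodesic path. -/
def GeodesicSpace (K : Type*) [MetricSpace K] : Prop :=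
  ∀ A B : K, ∃ (a b : ℝ) (γ : ℝ → K), a ≤ b ∧ IsGeodPath γ a b ∧ γ a = A ∧ γ b = B

/-- The betweenness property: for pairwise distinct `A B C D`, if `B` lies between
`A` and `C`, and `C` lies between `B` and `D`, then `B` and `C` lie between `A` and `D`. -/
def BetweennessProperty (K : Type*) [MetricSpace K] : Prop :=
  ∀ A B C D : K, A ≠ B → A ≠ C → A ≠ D → B ≠ C → B ≠ D → C ≠ D →
    LiesBetween B A C → LiesBetween C B D →
    LiesBetween B A D ∧ LiesBetween C A D

/-- A good curve `(L, M) : [aε, bε] → K × K` (with `τᵢ = iε`). -/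
def GoodCurve (ε : ℝ) (a b : ℕ) (L M : ℝ → K) : Prop :=
  LipschitzOnWith 1 L (Set.Icc ((a : ℝ) * ε) ((b : ℝ) * ε)) ∧
  LipschitzOnWith 1 M (Set.Icc ((a : ℝ) * ε) ((b : ℝ) * ε)) ∧
  (∀ i : ℕ, a ≤ i → i < b →
    LiesBetween (L (((i : ℝ) + 1) * ε)) (L ((i : ℝ) * ε)) (M ((i : ℝ) * ε))) ∧
  (∀ i : ℕ, a ≤ i → i < b → dist (L ((i : ℝ) * ε)) (L (((i : ℝ) + 1) * ε)) = ε) ∧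
  (∀ i : ℕ, a ≤ i → i ≤ b → ε ≤ dist (L ((i : ℝ) * ε)) (M ((i : ℝ) * ε)))

/-- An `ε`-simple-pursuit curve `(L, M) : [0, ∞) → K × K`. -/
def SimplePursuitCurve (ε : ℝ) (L M : ℝ → K) : Prop :=
  LipschitzOnWith 1 L (Set.Ici (0 : ℝ)) ∧
  LipschitzOnWith 1 M (Set.Ici (0 : ℝ)) ∧
  ∀ i : ℕ, ε ≤ dist (L ((i : ℝ) * ε)) (M ((i : ℝ) * ε)) →
    dist (L ((i : ℝ) * ε)) (L (((i : ℝ) + 1) * ε)) = ε ∧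
    LiesBetween (L (((i : ℝ) + 1) * ε)) (L ((i : ℝ) * ε)) (M ((i : ℝ) * ε))

/-- The restriction of `ζ = (L, M)` to `[iε, jε]` is a round for `A ⊆ K × K`. -/
def IsRound (ε : ℝ) (L M : ℝ → K) (A : Set (K × K)) (i j : ℕ) : Prop :=
  i + 1 < j ∧
  (L ((i : ℝ) * ε), M ((i : ℝ) * ε)) ∈ A ∧
  (L ((j : ℝ) * ε), M ((j : ℝ) * ε)) ∈ A ∧
  ∀ k : ℕ, i < k → k < j → (L ((k : ℝ) * ε), M ((k : ℝ) * ε)) ∉ A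

/-!
The shifted curves are `1`-Lipschitz maps into the compact space `K × K`, so Arzelà–Ascoli yields
a uniformly convergent subsequence, and every defining condition of a good curve is closed under
pointwise limits. Both ends of each round lie in `S`, which gives the bound `< ε`. Along the pursuit
curve the grid gap `d(L(iε), M(iε))` is nonincreasing, since `L` advances `ε` towards `M` while `M`
moves by at most `ε`; hence it converges, and both end gaps of the limit curve equal its limit.
-/

open Set NNReal

theorem exists_subseq_tendstoUniformlyOn_of_lipschitzOnWith {X Y : Type*} [PseudoMetricSpace X]
    [PseudoMetricSpace Y] [CompactSpace Y] {s : Set X} (hs : IsCompact s) {C : ℝ≥0}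
    (f : ℕ → X → Y) (hf : ∀ n, LipschitzOnWith C (f n) s) :
    ∃ φ : ℕ → ℕ, StrictMono φ ∧ ∃ g : X → Y,
      TendstoUniformlyOn (fun k => f (φ k)) g atTop s := by
  have := isCompact_iff_compactSpace.mp hs
  let F : Set C(s, Y) := {h | LipschitzWith C h}
  have hF : IsCompact F := by
    refine ArzelaAscoli.isCompact_of_equicontinuous F ?_
      (LipschitzWith.uniformEquicontinuous _ C fun h => h.2).equicontinuous
    have : ContinuousMap.toFun '' F = {h : s → Y | LipschitzWith C h} :=
      Set.ext fun h => ⟨by rintro ⟨h, hh, rfl⟩; exact hh, fun hh => ⟨⟨h, hh.continuous⟩, hh, rfl⟩⟩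
    rw [this]
    exact (isClosed_setOfPred_lipschitzWith C).isCompact
  obtain ⟨g, -, φ, hφ, hconv⟩ := hF.isSeqCompact
    (x := fun n => ⟨s.domRestrict (f n), (hf n).to_restrict.continuous⟩)
    fun n => (hf n).to_restrict
  refine ⟨φ, hφ, Function.extend Subtype.val g (f 0), ?_⟩
  rw [tendstoUniformlyOn_iff_tendstoUniformly_comp_coe,
    Function.extend_comp Subtype.val_injective]
  exact ContinuousMap.tendsto_iff_tendstoUniformly.mp hconv

theorem LipschitzOnWith.of_tendsto {ι X Y : Type*} [PseudoEMetricSpace X] [PseudoEMetricSpace Y]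
    {l : Filter ι} [l.NeBot] {f : ι → X → Y} {g : X → Y} {s : Set X} {C : ℝ≥0}
    (hf : ∀ᶠ k in l, LipschitzOnWith C (f k) s)
    (hg : ∀ x ∈ s, Tendsto (fun k => f k x) l (𝓝 (g x))) : LipschitzOnWith C g s :=
  fun x hx y hy => le_of_tendsto ((hg x hx).edist (hg y hy)) (hf.mono fun _ hk => hk hx hy)

theorem LipschitzOnWith.comp_const_add {f : ℝ → K} {C : ℝ≥0} (hf : LipschitzOnWith C f (Ici 0))
    {c : ℝ} (hc : 0 ≤ c) {s : Set ℝ} (hs : s ⊆ Ici 0) :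
    LipschitzOnWith C (fun t => f (c + t)) s := fun x hx y hy => by
  simpa only [edist_add_left] using
    hf (add_nonneg hc (hs hx) : 0 ≤ c + x) (add_nonneg hc (hs hy) : 0 ≤ c + y)

theorem isClosed_setOf_liesBetween : IsClosed {p : K × K × K | LiesBetween p.1 p.2.1 p.2.2} :=
  isClosed_eq (by fun_prop) (by fun_prop)

theorem LiesBetween.of_tendsto {ι : Type*} {l : Filter ι} [l.NeBot] {c a b : ι → K} {C A B : K}
    (h : ∀ᶠ k in l, LiesBetween (c k) (a k) (b k)) (hc : Tendsto c l (𝓝 C))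
    (ha : Tendsto a l (𝓝 A)) (hb : Tendsto b l (𝓝 B)) : LiesBetween C A B :=
  isClosed_setOf_liesBetween.mem_of_tendsto (hc.prodMk_nhds (ha.prodMk_nhds hb)) h

theorem natCast_mul_mem_Icc {ε : ℝ} (hε : 0 ≤ ε) {a b i : ℕ} (hai : a ≤ i) (hib : i ≤ b) :
    (i : ℝ) * ε ∈ Icc ((a : ℝ) * ε) ((b : ℝ) * ε) := by
  constructor <;> gcongr

theorem natCast_add_one_mul_mem_Icc {ε : ℝ} (hε : 0 ≤ ε) {a b i : ℕ} (hai : a ≤ i) (hib : i < b) :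
    ((i : ℝ) + 1) * ε ∈ Icc ((a : ℝ) * ε) ((b : ℝ) * ε) :=
  mod_cast natCast_mul_mem_Icc hε (hai.trans i.le_succ) hib

theorem GoodCurve.of_tendsto {ι : Type*} {l : Filter ι} [l.NeBot] {ε : ℝ} (hε : 0 ≤ ε) {a b : ℕ}
    {L M : ι → ℝ → K} {gL gM : ℝ → K} (hgood : ∀ᶠ k in l, GoodCurve ε a b (L k) (M k))
    (hL : ∀ t ∈ Icc ((a : ℝ) * ε) ((b : ℝ) * ε), Tendsto (fun k => L k t) l (𝓝 (gL t)))
    (hM : ∀ t ∈ Icc ((a : ℝ) * ε) ((b : ℝ) * ε), Tendsto (fun k => M k t) l (𝓝 (gM t))) :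
    GoodCurve ε a b gL gM := by
  refine ⟨.of_tendsto (hgood.mono fun _ h => h.1) hL, .of_tendsto (hgood.mono fun _ h => h.2.1) hM,
    fun i hai hib => ?_, fun i hai hib => ?_, fun i hai hib => ?_⟩
  · have hi := natCast_mul_mem_Icc hε hai hib.le
    exact .of_tendsto (hgood.mono fun _ h => h.2.2.1 i hai hib)
      (hL _ (natCast_add_one_mul_mem_Icc hε hai hib)) (hL _ hi) (hM _ hi)
  · refine tendsto_nhds_unique ((hL _ (natCast_mul_mem_Icc hε hai hib.le)).dist
      (hL _ (natCast_add_one_mul_mem_Icc hε hai hib))) ?_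
    exact tendsto_const_nhds.congr' (hgood.mono fun _ h => (h.2.2.2.1 i hai hib).symm)
  · have hi := natCast_mul_mem_Icc hε hai hib
    exact ge_of_tendsto ((hL _ hi).dist (hM _ hi)) (hgood.mono fun _ h => h.2.2.2.2 i hai hib)

theorem IsRound.dist_le_diam {ε : ℝ} {L M : ℝ → K} {A : Set (K × K)} {i j : ℕ}
    (h : IsRound ε L M A i j) (hA : Bornology.IsBounded A) :
    dist (L ((i : ℝ) * ε)) (L ((j : ℝ) * ε)) ≤ Metric.diam A :=
  (le_max_left _ _).trans (Metric.dist_le_diam_of_mem hA h.2.1 h.2.2.1)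

namespace SimplePursuitCurve

variable {ε : ℝ} {L M : ℝ → K}

theorem goodCurve_shift (hζ : SimplePursuitCurve ε L M) (hε : 0 ≤ ε)
    (hfar : ∀ i : ℕ, ε ≤ dist (L ((i : ℝ) * ε)) (M ((i : ℝ) * ε))) (j a b : ℕ) :
    GoodCurve ε a b (fun t => L ((j : ℝ) * ε + t)) (fun t => M ((j : ℝ) * ε + t)) := by
  have hIcc : Icc ((a : ℝ) * ε) ((b : ℝ) * ε) ⊆ Ici 0 :=
    fun t ht => (by positivity : (0 : ℝ) ≤ a * ε).trans ht.1
  have hshift : ∀ i : ℕ, (j : ℝ) * ε + (i : ℝ) * ε = ((j + i : ℕ) : ℝ) * ε := fun i => by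
    push_cast; ring
  have hshift_succ : ∀ i : ℕ, (j : ℝ) * ε + ((i : ℝ) + 1) * ε = (((j + i : ℕ) : ℝ) + 1) * ε :=
    fun i => by push_cast; ring
  refine ⟨hζ.1.comp_const_add (by positivity) hIcc, hζ.2.1.comp_const_add (by positivity) hIcc,
    fun i _ _ => ?_, fun i _ _ => ?_, fun i _ _ => ?_⟩
  · simpa only [hshift, hshift_succ] using (hζ.2.2 _ (hfar _)).2
  · simpa only [hshift, hshift_succ] using (hζ.2.2 _ (hfar _)).1
  · simpa only [hshift] using hfar _

theorem antitone_dist (hζ : SimplePursuitCurve ε L M) (hε : 0 ≤ ε)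
    (hfar : ∀ i : ℕ, ε ≤ dist (L ((i : ℝ) * ε)) (M ((i : ℝ) * ε))) :
    Antitone fun i : ℕ => dist (L ((i : ℝ) * ε)) (M ((i : ℝ) * ε)) := by
  refine antitone_nat_of_succ_le fun i => ?_
  obtain ⟨hstep, hbetween⟩ := hζ.2.2 i (hfar i)
  have hM : dist (M ((i : ℝ) * ε)) (M (((i : ℝ) + 1) * ε)) ≤ ε := by
    have := hζ.2.1.dist_le_mul ((i : ℝ) * ε) (by positivity : (0 : ℝ) ≤ _)
      (((i : ℝ) + 1) * ε) (by positivity : (0 : ℝ) ≤ _)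
    rwa [Real.dist_eq, show (i : ℝ) * ε - ((i : ℝ) + 1) * ε = -ε by ring, abs_neg,
      abs_of_nonneg hε, NNReal.coe_one, one_mul] at this
  push_cast
  calc dist (L (((i : ℝ) + 1) * ε)) (M (((i : ℝ) + 1) * ε))
      ≤ dist (L (((i : ℝ) + 1) * ε)) (M ((i : ℝ) * ε)) +
          dist (M ((i : ℝ) * ε)) (M (((i : ℝ) + 1) * ε)) := dist_triangle _ _ _
    _ ≤ dist (L ((i : ℝ) * ε)) (M ((i : ℝ) * ε)) := by
        unfold LiesBetween at hbetween; linarith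

theorem exists_tendsto_dist (hζ : SimplePursuitCurve ε L M) (hε : 0 ≤ ε)
    (hfar : ∀ i : ℕ, ε ≤ dist (L ((i : ℝ) * ε)) (M ((i : ℝ) * ε))) :
    ∃ δ, Tendsto (fun i : ℕ => dist (L ((i : ℝ) * ε)) (M ((i : ℝ) * ε))) atTop (𝓝 δ) :=
  ⟨_, tendsto_atTop_ciInf (hζ.antitone_dist hε hfar) ⟨0, by rintro _ ⟨i, rfl⟩; exact dist_nonneg⟩⟩

end SimplePursuitCurve

theorem stmt_10_general {K : Type*} [MetricSpace K] [CompactSpace K]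
    (ε : ℝ) (hε : 0 < ε)
    (L M : ℝ → K) (hζ : SimplePursuitCurve ε L M)
    (hfar : ∀ t : ℝ, 0 ≤ t → ε < dist (L t) (M t))
    (S : Set (K × K)) (hS : Metric.diam S < ε) (m : ℕ)
    (i : ℕ → ℕ) (hi : StrictMono i)
    (hrounds : ∀ n : ℕ, IsRound ε L M S (i n) (i n + m)) :
    ∃ φ : ℕ → ℕ, StrictMono φ ∧ ∃ gL gM : ℝ → K,
      TendstoUniformlyOn
        (fun k t => (L ((i (φ k) : ℝ) * ε + t), M ((i (φ k) : ℝ) * ε + t)))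
        (fun t => (gL t, gM t)) atTop (Set.Icc 0 ((m : ℝ) * ε)) ∧
      GoodCurve ε 0 m gL gM ∧
      dist (gL 0) (gL ((m : ℝ) * ε)) < ε ∧
      dist (gL 0) (gM 0) = dist (gL ((m : ℝ) * ε)) (gM ((m : ℝ) * ε)) := by
  have hfar_grid : ∀ j : ℕ, ε ≤ dist (L ((j : ℝ) * ε)) (M ((j : ℝ) * ε)) :=
    fun j => (hfar _ (by positivity)).le
  have hgood := hζ.goodCurve_shift hε.le hfar_grid
  obtain ⟨φ, hφ, g, hg⟩ := exists_subseq_tendstoUniformlyOn_of_lipschitzOnWith isCompact_Icc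
    (fun n t => (L ((i n : ℝ) * ε + t), M ((i n : ℝ) * ε + t)))
    fun n => by simpa using (hgood (i n) 0 m).1.prodMk (hgood (i n) 0 m).2.1
  have hpt : ∀ t ∈ Icc ((0 : ℕ) * ε) ((m : ℝ) * ε), Tendsto (fun k =>
      (L ((i (φ k) : ℝ) * ε + t), M ((i (φ k) : ℝ) * ε + t))) atTop (𝓝 (g t)) :=
    fun t ht => hg.tendsto_at (by simpa using ht)
  have hmem : ∀ j ≤ m, (j : ℝ) * ε ∈ Icc ((0 : ℕ) * ε) ((m : ℝ) * ε) :=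
    fun j hj => natCast_mul_mem_Icc hε.le j.zero_le hj
  have hend : dist (g ((0 : ℕ) * ε)).1 (g (m * ε)).1 ≤ Metric.diam S :=
    le_of_tendsto' ((hpt _ (hmem 0 m.zero_le)).fst_nhds.dist (hpt _ (hmem m le_rfl)).fst_nhds)
      fun k => by
        simpa [add_mul] using (hrounds (φ k)).dist_le_diam Metric.isBounded_of_compactSpace
  obtain ⟨δ, hδ⟩ := hζ.exists_tendsto_dist hε.le hfar_grid
  have hgap : ∀ j ≤ m, dist (g (j * ε)).1 (g (j * ε)).2 = δ := fun j hj => by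
    refine tendsto_nhds_unique ((hpt _ (hmem j hj)).fst_nhds.dist (hpt _ (hmem j hj)).snd_nhds) ?_
    refine (hδ.comp ((tendsto_add_atTop_nat j).comp (hi.comp hφ).tendsto_atTop)).congr fun k => ?_
    simp [add_mul]
  refine ⟨φ, hφ, fun t => (g t).1, fun t => (g t).2, hg, ?_, ?_, ?_⟩
  · exact .of_tendsto hε.le (.of_forall fun _ => hgood _ 0 m) (fun t ht => (hpt t ht).fst_nhds)
      fun t ht => (hpt t ht).snd_nhds
  · simpa using hend.trans_lt hS
  · simpa using (hgap 0 m.zero_le).trans (hgap m le_rfl).symm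

/-- The limit curve of a sequence of same-length rounds: some subsequence of the shifted
curves converges uniformly to a good curve `ζ* = (ζ*_L, ζ*_M)` with
`d(ζ*_L(0), ζ*_L(mε)) < ε` and `d(ζ*_L(0), ζ*_M(0)) = d(ζ*_L(mε), ζ*_M(mε))`. -/
theorem stmt_10 {K : Type*} [MetricSpace K] [CompactSpace K] (hK : GeodesicSpace K)
    (hbtw : BetweennessProperty K) (ε : ℝ) (hε : 0 < ε)
    (L M : ℝ → K) (hζ : SimplePursuitCurve ε L M)
    (hfar : ∀ t : ℝ, 0 ≤ t → ε < dist (L t) (M t))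
    (S : Set (K × K)) (hS : Metric.diam S < ε) (m : ℕ) (hm : 2 ≤ m)
    (i : ℕ → ℕ) (hi : StrictMono i)
    (hrounds : ∀ n : ℕ, IsRound ε L M S (i n) (i n + m)) :
    ∃ φ : ℕ → ℕ, StrictMono φ ∧ ∃ gL gM : ℝ → K,
      TendstoUniformlyOn
        (fun k t => (L ((i (φ k) : ℝ) * ε + t), M ((i (φ k) : ℝ) * ε + t)))
        (fun t => (gL t, gM t)) atTop (Set.Icc 0 ((m : ℝ) * ε)) ∧
      GoodCurve ε 0 m gL gM ∧
      dist (gL 0) (gL ((m : ℝ) * ε)) < ε ∧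
      dist (gL 0) (gM 0) = dist (gL ((m : ℝ) * ε)) (gM ((m : ℝ) * ε)) :=
  stmt_10_general ε hε L M hζ hfar S hS m i hi hrounds
end

section
/- Let (K,d) be a compact geodesic metric space satisfying the betweenness property and let ε > 0. Then for every ε-simple-pursuit curve ζ = (L, M) : [0, ∞) → K × K there exists a time T > 0 such that d(L(T), M(T)) < ε. -/
open Filter Topology

variable {K : Type*} [MetricSpace K]

/-!
Suppose capture never happens. Sampling the curves at the times `k * ε / 2`, the distance
`d j = d(L(jε), M(jε))` stays at least `ε` and never increases, because `L` gains exactly `ε` on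
each step while `M` gets away by at most `ε`. By compactness, shifted samples converge along a
subsequence to a configuration in which this distance is a constant `D`. The betweenness property
makes such a configuration run off to infinity: if `D > ε` the evader's positions satisfy
`d(ℓ₀, m₂ₙ) = D + nε`; if `D = ε` the evader always sits where the pursuer arrives next, the
midpoint times show that the pursuer's positions are aligned, and `d(ℓ₀, ℓ₂ₙ) = nε`. Both
contradict the boundedness of `K`.
-/

theorem BetweennessProperty.liesBetween_of_ne (hbtw : BetweennessProperty K) {A B C D : K}
    (hBC : B ≠ C) (hABC : LiesBetween B A C) (hBCD : LiesBetween C B D) :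
    LiesBetween B A D ∧ LiesBetween C A D := by
  unfold LiesBetween at *
  have hBC' := dist_pos.2 hBC
  by_cases hAB : A = B
  · subst hAB
    simpa using hBCD
  by_cases hCD : C = D
  · subst hCD
    simpa using hABC
  have hAB' := dist_pos.2 hAB
  have hCD' := dist_pos.2 hCD
  have hAC : A ≠ C := dist_pos.1 (by linarith)
  have hBD : B ≠ D := dist_pos.1 (by linarith)
  -- `A = D` would force `2 * dist B C = 0`.
  have hAD : A ≠ D := by
    rintro rfl
    rw [dist_comm C A, dist_comm B A] at hBCD
    linarith
  exact hbtw A B C D hAB hAC hAD hBC hBD hCD hABC hBCD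

theorem BetweennessProperty.dist_eq_sum_of_liesBetween (hbtw : BetweennessProperty K)
    {x : ℕ → K} (hne : ∀ k, x k ≠ x (k + 1))
    (hx : ∀ k, LiesBetween (x (k + 1)) (x k) (x (k + 2))) (n : ℕ) :
    dist (x 0) (x n) = ∑ k ∈ Finset.range n, dist (x k) (x (k + 1)) := by
  have hbetween : ∀ n, LiesBetween (x n) (x 0) (x (n + 1)) := by
    intro n
    induction n with
    | zero => simp [LiesBetween]
    | succ n ih => exact (hbtw.liesBetween_of_ne (hne n) ih (hx n)).2
  induction n with
  | zero => simp
  | succ n ih => rw [Finset.sum_range_succ, ← ih, hbetween n]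

theorem BetweennessProperty.liesBetween_of_le_dist_midpoints (hbtw : BetweennessProperty K)
    {ε : ℝ} (hε : 0 < ε) {a₀ a₁ a₂ p q : K} (h₀₁ : dist a₀ a₁ = ε) (h₁₂ : dist a₁ a₂ = ε)
    (hp₀ : dist a₀ p = ε / 2) (hp₁ : dist p a₁ = ε / 2) (hq₁ : dist a₁ q ≤ ε / 2)
    (hq₂ : dist q a₂ ≤ ε / 2) (hpq : ε ≤ dist p q) : LiesBetween a₁ a₀ a₂ := by
  have hpq₁ := dist_triangle p a₁ q
  have hq₁' : dist a₁ q = ε / 2 := by linarith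
  have hq₂' : dist q a₂ = ε / 2 := by linarith [dist_triangle a₁ q a₂]
  have hp : LiesBetween p a₀ a₁ := by unfold LiesBetween; linarith
  have ha₁ : LiesBetween a₁ p q := by unfold LiesBetween; linarith
  have hq : LiesBetween q a₁ a₂ := by unfold LiesBetween; linarith
  have hpa₁ : p ≠ a₁ := dist_pos.1 (by linarith)
  have ha₁q : a₁ ≠ q := dist_pos.1 (by linarith)
  exact (hbtw.liesBetween_of_ne ha₁q (hbtw.liesBetween_of_ne hpa₁ hp ha₁).2 hq).1

/-- `ℓ k` and `m k` model the positions of pursuer and evader at time `k * ε / 2`, and `d j`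
their distance at time `j * ε`. -/
structure IsPursuitSequence (ε : ℝ) (d : ℕ → ℝ) (ℓ m : ℕ → K) : Prop where
  dist_succ_left : ∀ k, dist (ℓ k) (ℓ (k + 1)) = ε / 2
  dist_succ_right_le : ∀ k, dist (m k) (m (k + 1)) ≤ ε / 2
  le_dist : ∀ k, ε ≤ dist (ℓ k) (m k)
  dist_even : ∀ j, dist (ℓ (2 * j)) (m (2 * j)) = d j
  dist_even_succ : ∀ j, dist (ℓ (2 * j + 2)) (m (2 * j)) = d j - ε

namespace IsPursuitSequence

variable {ε : ℝ} {d : ℕ → ℝ} {ℓ m : ℕ → K}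

theorem dist_left_even_succ (h : IsPursuitSequence ε d ℓ m) (j : ℕ) :
    dist (ℓ (2 * j)) (ℓ (2 * j + 2)) = ε := by
  have hle := dist_triangle (ℓ (2 * j)) (ℓ (2 * j + 1)) (ℓ (2 * j + 2))
  have hge := dist_triangle (ℓ (2 * j)) (ℓ (2 * j + 2)) (m (2 * j))
  linarith [h.dist_succ_left (2 * j), h.dist_succ_left (2 * j + 1), h.dist_even j,
    h.dist_even_succ j]

theorem dist_right_even_succ_le (h : IsPursuitSequence ε d ℓ m) (j : ℕ) :
    dist (m (2 * j)) (m (2 * j + 2)) ≤ ε := by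
  linarith [dist_triangle (m (2 * j)) (m (2 * j + 1)) (m (2 * j + 2)),
    h.dist_succ_right_le (2 * j), h.dist_succ_right_le (2 * j + 1)]

theorem antitone (h : IsPursuitSequence ε d ℓ m) : Antitone d := by
  refine antitone_nat_of_succ_le fun j => ?_
  have hnext := h.dist_even (j + 1)
  rw [mul_add_one] at hnext
  linarith [dist_triangle (ℓ (2 * j + 2)) (m (2 * j)) (m (2 * j + 2)), h.dist_even_succ j,
    h.dist_right_even_succ_le j]

theorem shift (h : IsPursuitSequence ε d ℓ m) (n : ℕ) :
    IsPursuitSequence ε (fun j => d (n + j)) (fun k => ℓ (2 * n + k)) (fun k => m (2 * n + k)) where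
  dist_succ_left k := h.dist_succ_left (2 * n + k)
  dist_succ_right_le k := h.dist_succ_right_le (2 * n + k)
  le_dist k := h.le_dist (2 * n + k)
  dist_even j := by simpa only [mul_add] using h.dist_even (n + j)
  dist_even_succ j := by simpa only [mul_add, add_assoc] using h.dist_even_succ (n + j)

theorem of_tendsto {ι : Type*} {F : Filter ι} [F.NeBot] {d : ι → ℕ → ℝ} {ℓ m : ι → ℕ → K}
    {d' : ℕ → ℝ} {ℓ' m' : ℕ → K} (h : ∀ i, IsPursuitSequence ε (d i) (ℓ i) (m i))
    (hd : Tendsto d F (𝓝 d')) (hℓ : Tendsto ℓ F (𝓝 ℓ')) (hm : Tendsto m F (𝓝 m')) :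
    IsPursuitSequence ε d' ℓ' m' := by
  rw [tendsto_pi_nhds] at hd hℓ hm
  exact
  { dist_succ_left k := tendsto_nhds_unique ((hℓ k).dist (hℓ (k + 1)))
      (tendsto_const_nhds.congr fun i => ((h i).dist_succ_left k).symm)
    dist_succ_right_le k := le_of_tendsto' ((hm k).dist (hm (k + 1)))
      fun i => (h i).dist_succ_right_le k
    le_dist k := ge_of_tendsto' ((hℓ k).dist (hm k)) fun i => (h i).le_dist k
    dist_even j := tendsto_nhds_unique ((hℓ _).dist (hm _))
      ((hd j).congr fun i => ((h i).dist_even j).symm)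
    dist_even_succ j := tendsto_nhds_unique ((hℓ _).dist (hm _))
      (((hd j).sub_const ε).congr fun i => ((h i).dist_even_succ j).symm) }

theorem exists_const [CompactSpace K] (h : IsPursuitSequence ε d ℓ m) :
    ∃ (D : ℝ) (ℓ' m' : ℕ → K), IsPursuitSequence ε (fun _ => D) ℓ' m' := by
  have hbdd : BddBelow (Set.range d) :=
    ⟨0, by rintro _ ⟨j, rfl⟩; exact (h.dist_even j) ▸ dist_nonneg⟩
  have hD := tendsto_atTop_ciInf h.antitone hbdd
  obtain ⟨z, -, φ, hφ, hz⟩ := isCompact_univ.tendsto_subseq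
    (x := fun n k => (ℓ (2 * n + k), m (2 * n + k))) fun _ => Set.mem_univ _
  refine ⟨⨅ j, d j, fun k => (z k).1, fun k => (z k).2, of_tendsto (fun i => h.shift (φ i)) ?_
    (((continuous_pi fun k => continuous_fst.comp (continuous_apply k)).tendsto z).comp hz)
    (((continuous_pi fun k => continuous_snd.comp (continuous_apply k)).tendsto z).comp hz)⟩
  exact tendsto_pi_nhds.2 fun j =>
    ((tendsto_add_atTop_iff_nat j).2 hD).comp hφ.tendsto_atTop

theorem dist_left_zero_left_even (hbtw : BetweennessProperty K) (hε : 0 < ε)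
    (h : IsPursuitSequence ε (fun _ => ε) ℓ m) (n : ℕ) :
    dist (ℓ 0) (ℓ (2 * n)) = n * ε := by
  have hcatch : ∀ j, m (2 * j) = ℓ (2 * (j + 1)) := fun j => by
    rw [mul_add_one]
    exact (dist_eq_zero.1 <| by simpa using h.dist_even_succ j).symm
  have hstep : ∀ j, dist (ℓ (2 * j)) (ℓ (2 * (j + 1))) = ε := h.dist_left_even_succ
  have hne : ∀ j, ℓ (2 * j) ≠ ℓ (2 * (j + 1)) := fun j => dist_pos.1 (by rw [hstep j]; exact hε)
  have hx : ∀ j, LiesBetween (ℓ (2 * (j + 1))) (ℓ (2 * j)) (ℓ (2 * (j + 2))) := by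
    intro j
    refine hbtw.liesBetween_of_le_dist_midpoints hε (hstep j) (hstep (j + 1))
      (h.dist_succ_left (2 * j)) (h.dist_succ_left (2 * j + 1)) (q := m (2 * j + 1)) ?_ ?_
      (h.le_dist (2 * j + 1))
    · rw [← hcatch j]
      exact h.dist_succ_right_le (2 * j)
    · rw [← hcatch (j + 1)]
      exact h.dist_succ_right_le (2 * j + 1)
  simpa [hstep] using hbtw.dist_eq_sum_of_liesBetween (x := fun j => ℓ (2 * j)) hne hx n

theorem dist_left_zero_right_even (hbtw : BetweennessProperty K) {D : ℝ} (hεD : ε < D)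
    (h : IsPursuitSequence ε (fun _ => D) ℓ m) (n : ℕ) :
    dist (ℓ 0) (m (2 * n)) = D + n * ε := by
  induction n with
  | zero => simpa using h.dist_even 0
  | succ n ih =>
    have hstep : ∀ j, dist (ℓ (2 * j)) (ℓ (2 * (j + 1))) = ε := h.dist_left_even_succ
    have hfar : dist (ℓ 0) (ℓ (2 * (n + 1))) ≤ (n + 1) * ε := by
      simpa [hstep] using dist_le_range_sum_dist (fun j => ℓ (2 * j)) (n + 1)
    have hnext := h.dist_even (n + 1)
    rw [mul_add_one] at hfar hnext
    have hℓ : LiesBetween (ℓ (2 * n + 2)) (ℓ 0) (m (2 * n)) := by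
      unfold LiesBetween
      linarith [dist_triangle (ℓ 0) (ℓ (2 * n + 2)) (m (2 * n)), h.dist_even_succ n]
    have hm : LiesBetween (m (2 * n)) (ℓ (2 * n + 2)) (m (2 * n + 2)) := by
      unfold LiesBetween
      linarith [dist_triangle (ℓ (2 * n + 2)) (m (2 * n)) (m (2 * n + 2)),
        h.dist_even_succ n, h.dist_right_even_succ_le n]
    have hne : ℓ (2 * n + 2) ≠ m (2 * n) := dist_pos.1 (by rw [h.dist_even_succ n]; linarith)
    have hout := (hbtw.liesBetween_of_ne hne hℓ hm).2
    unfold LiesBetween at hout hm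
    rw [mul_add_one]
    push_cast
    linarith [h.dist_even_succ n]

theorem not_const [BoundedSpace K] (hbtw : BetweennessProperty K) (hε : 0 < ε) {D : ℝ} :
    ¬ IsPursuitSequence ε (fun _ => D) ℓ m := by
  intro h
  have hεD : ε ≤ D := (h.le_dist 0).trans_eq (h.dist_even 0)
  have hfar : ∀ n : ℕ, ∃ y, n * ε ≤ dist (ℓ 0) y := by
    rcases hεD.eq_or_lt with rfl | hεD
    · exact fun n => ⟨_, (h.dist_left_zero_left_even hbtw hε n).ge⟩
    · exact fun n => ⟨_, (h.dist_left_zero_right_even hbtw hεD n).ge.trans' (by linarith)⟩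
  obtain ⟨C, hC⟩ := Metric.boundedSpace_iff.1 ‹BoundedSpace K›
  obtain ⟨n, hn⟩ := exists_nat_gt (C / ε)
  obtain ⟨y, hy⟩ := hfar n
  have := hC (ℓ 0) y
  rw [div_lt_iff₀ hε] at hn
  linarith

end IsPursuitSequence

theorem LipschitzOnWith.dist_le_sub {f : ℝ → K} (hf : LipschitzOnWith 1 f (Set.Ici 0))
    {s t : ℝ} (hs : 0 ≤ s) (hst : s ≤ t) : dist (f s) (f t) ≤ t - s := by
  simpa [Real.dist_eq, abs_of_nonpos (sub_nonpos.2 hst)] using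
    hf.dist_le_mul s hs t (hs.trans hst)

namespace SimplePursuitCurve

variable {ε : ℝ} {L M : ℝ → K}

theorem le_dist_of_forall_pos (hζ : SimplePursuitCurve ε L M)
    (hfar : ∀ t, 0 < t → ε ≤ dist (L t) (M t)) (t : ℝ) (ht : 0 ≤ t) :
    ε ≤ dist (L t) (M t) := by
  have hcont : Tendsto (fun s => dist (L s) (M s)) (𝓝[>] t) (𝓝 (dist (L t) (M t))) :=
    ((hζ.1.continuousOn t ht).dist (hζ.2.1.continuousOn t ht)).mono_left
      (nhdsWithin_mono t (Set.Ioi_subset_Ici ht))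
  exact ge_of_tendsto hcont (eventually_nhdsWithin_of_forall fun s hs => hfar s (ht.trans_lt hs))

theorem isPursuitSequence (hζ : SimplePursuitCurve ε L M) (hε : 0 < ε)
    (hfar : ∀ t, 0 ≤ t → ε ≤ dist (L t) (M t)) :
    IsPursuitSequence ε (fun j => dist (L (j * ε)) (M (j * ε)))
      (fun k => L (k * (ε / 2))) (fun k => M (k * (ε / 2))) := by
  obtain ⟨hL, hM, hstep⟩ := hζ
  have heven : ∀ j : ℕ, ((2 * j : ℕ) : ℝ) * (ε / 2) = j * ε := fun j => by push_cast; ring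
  have hodd : ∀ j : ℕ, ((2 * j + 1 : ℕ) : ℝ) * (ε / 2) = j * ε + ε / 2 := fun j => by
    push_cast; ring
  have heven' : ∀ j : ℕ, ((2 * j + 2 : ℕ) : ℝ) * (ε / 2) = (j + 1) * ε := fun j => by
    push_cast; ring
  -- covering the distance `ε` of a step in time `ε` forces full speed on both halves
  have hhalves : ∀ j : ℕ, dist (L (j * ε)) (L (j * ε + ε / 2)) = ε / 2 ∧
      dist (L (j * ε + ε / 2)) (L ((j + 1) * ε)) = ε / 2 := by
    intro j
    have hj : (0 : ℝ) ≤ j * ε := by positivity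
    have h₁ := hL.dist_le_sub hj (by linarith : j * ε ≤ j * ε + ε / 2)
    have h₂ := hL.dist_le_sub (by linarith) (by linarith : j * ε + ε / 2 ≤ (j + 1) * ε)
    have hε' := (hstep j (hfar _ hj)).1
    constructor <;> linarith [dist_triangle (L (j * ε)) (L (j * ε + ε / 2)) (L ((j + 1) * ε))]
  refine ⟨fun k => ?_, fun k => ?_, fun k => hfar _ (by positivity), fun j => by simp only [heven],
    fun j => ?_⟩
  · obtain ⟨j, rfl | rfl⟩ := Nat.even_or_odd' k
    · simpa only [heven, hodd] using (hhalves j).1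
    · simpa only [hodd, heven'] using (hhalves j).2
  · refine (hM.dist_le_sub (by positivity) ?_).trans_eq ?_ <;> push_cast <;> linarith
  · obtain ⟨hd, hb⟩ := hstep j (hfar _ (by positivity))
    unfold LiesBetween at hb
    simp only [heven, heven']
    linarith

end SimplePursuitCurve

theorem stmt_11_general {K : Type*} [MetricSpace K] [CompactSpace K]
    (hbtw : BetweennessProperty K) (ε : ℝ) (hε : 0 < ε)
    (L M : ℝ → K) (hζ : SimplePursuitCurve ε L M) :
    ∃ T : ℝ, 0 < T ∧ dist (L T) (M T) < ε := by
  by_contra! hfar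
  obtain ⟨D, ℓ, m, h⟩ :=
    (hζ.isPursuitSequence hε (hζ.le_dist_of_forall_pos hfar)).exists_const
  exact IsPursuitSequence.not_const hbtw hε h

/-- In a compact geodesic space with the betweenness property, every `ε`-simple-pursuit
curve achieves `ε`-capture at some positive time. -/
theorem stmt_11 {K : Type*} [MetricSpace K] [CompactSpace K] (hK : GeodesicSpace K)
    (hbtw : BetweennessProperty K) (ε : ℝ) (hε : 0 < ε)
    (L M : ℝ → K) (hζ : SimplePursuitCurve ε L M) :
    ∃ T : ℝ, 0 < T ∧ dist (L T) (M T) < ε :=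
  stmt_11_general hbtw ε hε L M hζ
end
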